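/- Reduct characterization of df-satisfaction: for any interpretation ⟨h,t⟩ and formula φ, ⟨h,t⟩ ⊨_df φ if and only if h ⊨_cl φ^t, where φ^t is the Ferraris-style reduct of φ with respect to t. -/
import Mathlib


open Classical

/-- Valuations; `none` stands for undefined. -/
abbrev Val (X D : Type) := X → Option D

/-- `v ⊆ v'` on valuations. -/
def Val.le {X D : Type} (v v' : Val X D) : Prop :=
  ∀ x d, v x = some d → v' x = some d

/-- Formulas over a type `C` of atoms. -/
inductive Form (C : Type) : Type
  | bot : Form C
  | atom : C → Form C
  | and : Form C → Form C → Form C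
  | or : Form C → Form C → Form C
  | imp : Form C → Form C → Form C

/-- Generic HT_C satisfaction, given a denotation of basic atoms `C0` and an
evaluation of atoms `C` into basic atoms relative to an interpretation. -/
def sat {X D C C0 : Type} (den : C0 → Set (Val X D))
    (eval : Val X D → Val X D → C → C0) :
    Val X D → Val X D → Form C → Prop
  | _, _, .bot => False
  | h, t, .atom c => h ∈ den (eval h t c) ∧ t ∈ den (eval t t c)
  | h, t, .and φ ψ => sat den eval h t φ ∧ sat den eval h t ψ
  | h, t, .or φ ψ => sat den eval h t φ ∨ sat den eval h t ψ
  | h, t, .imp φ ψ =>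
      (¬ sat den eval h t φ ∨ sat den eval h t ψ) ∧
      (¬ sat den eval t t φ ∨ sat den eval t t ψ)

/-- Basic constraint atoms: a shape together with basic argument terms. -/
abbrev BAtom (A ι T0 : Type) := A × (ι → T0)

/-- Basic formulas (condition-free). -/
abbrev BForm (A ι T0 : Type) := Form (BAtom A ι T0)

/-- A term slot: either a basic term or a conditional term `(s|s':ψ)` whose
condition is a basic formula. -/
inductive Slot (T0 F : Type) : Type
  | basic (b : T0)
  | cond (s s' : T0) (φ : F)

/-- Constraint atoms possibly containing conditional terms. -/
abbrev CAtom (A ι T0 : Type) := A × (ι → Slot T0 (BForm A ι T0))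

/-- Formulas over constraint atoms. -/
abbrev CForm (A ι T0 : Type) := Form (CAtom A ι T0)

/-- HT satisfaction of basic formulas. -/
def satB {X D A ι T0 : Type} (den0 : BAtom A ι T0 → Set (Val X D))
    (h t : Val X D) (φ : BForm A ι T0) : Prop :=
  sat den0 (fun _ _ c => c) h t φ

/-- The df-evaluation of an atom at `⟨h,t⟩`: each conditional term `(s|s':ψ)`
is replaced by `s` if `⟨h,t⟩ ⊨ ψ` and by `s'` otherwise. -/
noncomputable def evalA {X D A ι T0 : Type} (den0 : BAtom A ι T0 → Set (Val X D))
    (h t : Val X D) (c : CAtom A ι T0) : BAtom A ι T0 :=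
  (c.1, fun i =>
    match c.2 i with
    | .basic b => b
    | .cond s s' φ => if satB den0 h t φ then s else s')

/-- HT_C satisfaction under the df-semantics. -/
def satDF {X D A ι T0 : Type} (den0 : BAtom A ι T0 → Set (Val X D))
    (h t : Val X D) (φ : CForm A ι T0) : Prop :=
  sat den0 (evalA den0) h t φ

/-- Generic classical satisfaction, given a classical atom-satisfaction. -/
def satCl {X D C : Type} (holds : Val X D → C → Prop) :
    Val X D → Form C → Prop
  | _, .bot => False
  | v, .atom c => holds v c
  | v, .and φ ψ => satCl holds v φ ∧ satCl holds v ψ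
  | v, .or φ ψ => satCl holds v φ ∨ satCl holds v ψ
  | v, .imp φ ψ => ¬ satCl holds v φ ∨ satCl holds v ψ

/-- Classical satisfaction of a basic atom. -/
def holdsB {X D A ι T0 : Type} (den0 : BAtom A ι T0 → Set (Val X D))
    (v : Val X D) (c : BAtom A ι T0) : Prop :=
  v ∈ den0 c

/-- Classical satisfaction of a constraint atom: `t ⊨_cl c` iff
`t ∈ ⟦eval⟨t,t⟩(c)⟧`. -/
noncomputable def holdsC {X D A ι T0 : Type} (den0 : BAtom A ι T0 → Set (Val X D))
    (v : Val X D) (c : CAtom A ι T0) : Prop :=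
  v ∈ den0 (evalA den0 v v c)

/-- The reduct of a basic formula w.r.t. `t`. -/
noncomputable def reductB {X D A ι T0 : Type} (den0 : BAtom A ι T0 → Set (Val X D))
    (t : Val X D) : BForm A ι T0 → BForm A ι T0
  | .bot => .bot
  | .atom c => if satCl (holdsB den0) t (.atom c) then .atom c else .bot
  | .and φ ψ =>
      if satCl (holdsB den0) t (.and φ ψ) then
        .and (reductB den0 t φ) (reductB den0 t ψ) else .bot
  | .or φ ψ =>
      if satCl (holdsB den0) t (.or φ ψ) then
        .or (reductB den0 t φ) (reductB den0 t ψ) else .bot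
  | .imp φ ψ =>
      if satCl (holdsB den0) t (.imp φ ψ) then
        .imp (reductB den0 t φ) (reductB den0 t ψ) else .bot

/-- The Ferraris-style reduct `φ^t` of a formula with conditional terms:
maximal subformulas classically falsified by `t` become `⊥`, and the
conditions inside satisfied atoms are reduced recursively. -/
noncomputable def reduct {X D A ι T0 : Type} (den0 : BAtom A ι T0 → Set (Val X D))
    (t : Val X D) : CForm A ι T0 → CForm A ι T0
  | .bot => .bot
  | .atom c =>
      if satCl (holdsC den0) t (.atom c) then
        .atom (c.1, fun i =>
          match c.2 i with
          | .basic b => .basic b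
          | .cond s s' φ => .cond s s' (reductB den0 t φ))
      else .bot
  | .and φ ψ =>
      if satCl (holdsC den0) t (.and φ ψ) then
        .and (reduct den0 t φ) (reduct den0 t ψ) else .bot
  | .or φ ψ =>
      if satCl (holdsC den0) t (.or φ ψ) then
        .or (reduct den0 t φ) (reduct den0 t ψ) else .bot
  | .imp φ ψ =>
      if satCl (holdsC den0) t (.imp φ ψ) then
        .imp (reduct den0 t φ) (reduct den0 t ψ) else .bot

theorem sat_persist {X D C C0 : Type} (den : C0 → Set (Val X D))
    (eval : Val X D → Val X D → C → C0) (h t : Val X D) (φ : Form C)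
    (H : sat den eval h t φ) : sat den eval t t φ := by
  induction φ with
  | bot => exact H
  | atom c => exact ⟨H.2, H.2⟩
  | and φ ψ ihφ ihψ => exact ⟨ihφ H.1, ihψ H.2⟩
  | or φ ψ ihφ ihψ => exact H.elim (fun a => Or.inl (ihφ a)) (fun a => Or.inr (ihψ a))
  | imp φ ψ _ _ => exact ⟨H.2, H.2⟩

theorem sat_tt {X D C C0 : Type} (den : C0 → Set (Val X D))
    (eval : Val X D → Val X D → C → C0) (t : Val X D) (φ : Form C) :
    sat den eval t t φ ↔ satCl (fun v c => v ∈ den (eval v v c)) t φ := by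
  induction φ with
  | bot => simp [sat, satCl]
  | atom c => simp [sat, satCl]
  | and φ ψ ih1 ih2 => simp [sat, satCl, ih1, ih2]
  | or φ ψ ih1 ih2 => simp [sat, satCl, ih1, ih2]
  | imp φ ψ ih1 ih2 => simp [sat, satCl, ih1, ih2]

theorem satB_tt {X D A ι T0 : Type} (den0 : BAtom A ι T0 → Set (Val X D))
    (t : Val X D) (φ : BForm A ι T0) :
    satB den0 t t φ ↔ satCl (holdsB den0) t φ :=
  sat_tt den0 (fun _ _ c => c) t φ

theorem reductB_correct {X D A ι T0 : Type} (den0 : BAtom A ι T0 → Set (Val X D))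
    (h t : Val X D) (φ : BForm A ι T0) :
    satB den0 h t φ ↔ satCl (holdsB den0) h (reductB den0 t φ) := by
  induction φ with
  | bot => simp [satB, sat, reductB, satCl]
  | atom c =>
      by_cases hc : satCl (holdsB den0) t (.atom c)
      · simp only [reductB, if_pos hc]
        simp only [satCl, holdsB] at hc ⊢
        simp [satB, sat, hc]
      · simp only [reductB, if_neg hc]
        simp only [satCl, holdsB] at hc ⊢
        simp [satB, sat, hc]
  | and φ ψ ih1 ih2 =>
      by_cases hc : satCl (holdsB den0) t (.and φ ψ)
      · simp only [reductB, if_pos hc]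
        exact and_congr ih1 ih2
      · simp only [reductB, if_neg hc]
        simp only [satCl] at hc ⊢
        constructor
        · intro H
          exact hc ((satB_tt den0 t (.and φ ψ)).mp
            (sat_persist _ _ h t _ H))
        · exact False.elim
  | or φ ψ ih1 ih2 =>
      by_cases hc : satCl (holdsB den0) t (.or φ ψ)
      · simp only [reductB, if_pos hc]
        exact or_congr ih1 ih2
      · simp only [reductB, if_neg hc]
        simp only [satCl] at hc ⊢
        constructor
        · intro H
          exact hc ((satB_tt den0 t (.or φ ψ)).mp
            (sat_persist _ _ h t _ H))
        · exact False.elim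
  | imp φ ψ ih1 ih2 =>
      by_cases hc : satCl (holdsB den0) t (.imp φ ψ)
      · simp only [reductB, if_pos hc]
        have h2 : satB den0 t t (.imp φ ψ) := by
          rw [satB_tt]; exact hc
        have h2' : ¬ sat den0 (fun _ _ c => c) t t φ ∨ sat den0 (fun _ _ c => c) t t ψ := h2.1
        constructor
        · intro H
          simp only [satCl]
          rcases H.1 with a | a
          · exact Or.inl (fun b => a ((ih1 ..).mpr b))
          · exact Or.inr ((ih2 ..).mp a)
        · intro H
          simp only [satCl] at H
          constructor
          · rcases H with a | a
            · exact Or.inl (fun b => a ((ih1 ..).mp b))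
            · exact Or.inr ((ih2 ..).mpr a)
          · exact h2'
      · simp only [reductB, if_neg hc]
        simp only [satCl] at hc ⊢
        constructor
        · intro H
          exact hc ((satB_tt den0 t (.imp φ ψ)).mp
            (sat_persist _ _ h t _ H))
        · exact False.elim

/-- Reduct characterization of df-satisfaction: for any interpretation `⟨h,t⟩`
and formula `φ`, `⟨h,t⟩ ⊨_df φ` iff `h ⊨_cl φ^t` (denotations are monotone). -/
theorem satDF_iff_satCl_reduct {X D A ι T0 : Type}
    (den0 : BAtom A ι T0 → Set (Val X D))
    (hmono : ∀ (c : BAtom A ι T0) (v v' : Val X D),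
      v ∈ den0 c → Val.le v v' → v' ∈ den0 c)
    (h t : Val X D) (hle : Val.le h t) (φ : CForm A ι T0) :
    satDF den0 h t φ ↔ satCl (holdsC den0) h (reduct den0 t φ) := by
  have htt : ∀ χ : CForm A ι T0, satDF den0 t t χ ↔ satCl (holdsC den0) t χ :=
    fun χ => sat_tt den0 (evalA den0) t χ
  induction φ with
  | bot => simp [satDF, sat, reduct, satCl]
  | atom c =>
      have heval : evalA den0 h h (c.1, fun i =>
          match c.2 i with
          | .basic b => Slot.basic b
          | .cond s s' ψ => Slot.cond s s' (reductB den0 t ψ)) = evalA den0 h t c := by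
        unfold evalA
        refine congrArg (Prod.mk c.1) ?_
        funext i
        cases hs : c.2 i with
        | basic b => simp [hs]
        | cond s s' ψ =>
            have hiff : satB den0 h h (reductB den0 t ψ) ↔ satB den0 h t ψ := by
              rw [satB_tt]; exact (reductB_correct den0 h t ψ).symm
            simp [hs, hiff]
      by_cases hc : satCl (holdsC den0) t (.atom c)
      · simp only [reduct, if_pos hc]
        simp only [satCl, holdsC] at hc ⊢
        rw [heval]
        simp only [satDF, sat]
        exact ⟨fun H => H.1, fun H => ⟨H, hc⟩⟩
      · simp only [reduct, if_neg hc]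
        simp only [satCl, holdsC] at hc ⊢
        simp only [satDF, sat]
        exact ⟨fun H => hc H.2, False.elim⟩
  | and φ ψ ih1 ih2 =>
      by_cases hc : satCl (holdsC den0) t (.and φ ψ)
      · simp only [reduct, if_pos hc]
        exact and_congr ih1 ih2
      · simp only [reduct, if_neg hc]
        exact ⟨fun H => hc ((htt (.and φ ψ)).mp (sat_persist _ _ h t _ H)), False.elim⟩
  | or φ ψ ih1 ih2 =>
      by_cases hc : satCl (holdsC den0) t (.or φ ψ)
      · simp only [reduct, if_pos hc]
        exact or_congr ih1 ih2
      · simp only [reduct, if_neg hc]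
        exact ⟨fun H => hc ((htt (.or φ ψ)).mp (sat_persist _ _ h t _ H)), False.elim⟩
  | imp φ ψ ih1 ih2 =>
      by_cases hc : satCl (holdsC den0) t (.imp φ ψ)
      · simp only [reduct, if_pos hc]
        have h2 : satDF den0 t t (.imp φ ψ) := (htt (.imp φ ψ)).mpr hc
        have h2' : ¬ sat den0 (evalA den0) t t φ ∨ sat den0 (evalA den0) t t ψ := h2.1
        constructor
        · intro H
          simp only [satCl]
          rcases H.1 with a | a
          · exact Or.inl (fun b => a (ih1.mpr b))
          · exact Or.inr (ih2.mp a)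
        · intro H
          simp only [satCl] at H
          constructor
          · rcases H with a | a
            · exact Or.inl (fun b => a (ih1.mp b))
            · exact Or.inr (ih2.mpr a)
          · exact h2'
      · simp only [reduct, if_neg hc]
        exact ⟨fun H => hc ((htt (.imp φ ψ)).mp (sat_persist _ _ h t _ H)), False.elim⟩
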